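/- Let U be a bounded convex domain in R² and suppose z₀ ∈ U satisfies d_U(z₀,φ) = d_U(z₀,φ+π) for all φ ∈ [0,2π). Then D_σ v_U(z₀) = 0 for every direction σ, and z₀ is the variocentre of U, i.e., the unique minimum of the strictly convex function v_U. -/

import Mathlib

open MeasureTheory Real

/-- Distance from `z` to the boundary of `U ⊆ ℂ` along the ray in direction `e^{iφ}`. -/
noncomputable def rayDist2 (U : Set ℂ) (z : ℂ) (φ : ℝ) : ℝ :=
  sSup {t : ℝ | 0 ≤ t ∧ z + (t : ℂ) * Complex.exp (φ * Complex.I) ∈ U}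

/-- The `k`-th integral mean of the distance-to-the-boundary function. -/
noncomputable def Imom2 (U : Set ℂ) (k : ℕ) (z : ℂ) : ℝ :=
  (1 / (2 * π)) * ∫ φ in (0:ℝ)..(2 * π), (rayDist2 U z φ) ^ k

/-- The variance of the distance to the boundary. -/
noncomputable def varDist2 (U : Set ℂ) (z : ℂ) : ℝ :=
  Imom2 U 2 z - (Imom2 U 1 z) ^ 2

/-- Directional derivative of `v` at `z` in the direction `e^{iσ}`. -/
noncomputable def dirDeriv2 (v : ℂ → ℝ) (σ : ℝ) (z : ℂ) : ℝ :=
  deriv (fun t : ℝ => v (z + (t : ℂ) * Complex.exp (σ * Complex.I))) 0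

open Topology

/-!
Central symmetry of the ray function about `z₀` makes `U` invariant under `z ↦ 2 z₀ - z`, so
`v_U` is invariant under this reflection and its directional derivatives at `z₀` vanish.

For the minimum, `I₂` is the same at every point of `U` (`∫ d² = 2 · area` in polar coordinates),
so it suffices to show `I₁(z) < I₁(z₀)`. With `w = 2 z₀ - z`, concavity of `x ↦ d_U(x, φ)` gives
`d(z, φ) + d(w, φ) ≤ 2 d(z₀, φ)`, and `d(w, φ) = d(z, φ + π)` has the same mean as `d(z, ·)`;
hence `I₁(z) ≤ I₁(z₀)`. Equality would force `d(z, ·) + d(w, ·) = 2 d(z₀, ·)`, and then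
`∫ (d_z + d_w)² = 4 ∫ d_{z₀}² = 2 ∫ d_z² + 2 ∫ d_w²` forces `d_z = d_w`, which fails in the
direction of `z - z₀`.
-/

theorem Function.Periodic.eq_of_eqOn_Ico {α β : Type*} [AddCommGroup α] [LinearOrder α]
    [IsOrderedAddMonoid α] [Archimedean α] {f g : α → β} {T : α} (hf : Function.Periodic f T)
    (hg : Function.Periodic g T) (hT : 0 < T) (h : Set.EqOn f g (Set.Ico 0 T)) : f = g := by
  have hfg : Function.Periodic (fun x ↦ (f x, g x)) T := fun x ↦ by simp only [hf x, hg x]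
  funext x
  obtain ⟨y, hy, hxy⟩ := hfg.exists_mem_Ico₀ hT x
  rw [Prod.mk.injEq] at hxy
  rw [hxy.1, hxy.2, h hy]

theorem Function.Periodic.intervalIntegral_lt_intervalIntegral {f g : ℝ → ℝ} {T : ℝ}
    (hf : Function.Periodic f T) (hg : Function.Periodic g T) (hT : 0 < T)
    (hfc : Continuous f) (hgc : Continuous g) (hle : ∀ x, f x ≤ g x) {x₀ : ℝ}
    (hlt : f x₀ < g x₀) : ∫ x in (0 : ℝ)..T, f x < ∫ x in (0 : ℝ)..T, g x := by
  obtain ⟨y, hy, hxy⟩ := (hg.sub hf).exists_mem_Ico₀ hT x₀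
  refine intervalIntegral.integral_lt_integral_of_continuousOn_of_le_of_exists_lt hT
    hfc.continuousOn hgc.continuousOn (fun x _ ↦ hle x) ⟨y, Set.Ico_subset_Icc_self hy, ?_⟩
  simp only [Pi.sub_apply] at hxy
  linarith

theorem intervalIntegral_lt_of_add_le_two_mul {a c m : ℝ → ℝ} {T : ℝ} (hT : 0 < T)
    (ha : Continuous a) (hc : Continuous c) (hm : Continuous m) (hpa : Function.Periodic a T)
    (hpc : Function.Periodic c T) (hpm : Function.Periodic m T) (hchord : ∀ φ, a φ + c φ ≤ 2 * m φ)
    (hIc : ∫ φ in (0 : ℝ)..T, c φ = ∫ φ in (0 : ℝ)..T, a φ)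
    (hIa2 : ∫ φ in (0 : ℝ)..T, a φ ^ 2 = ∫ φ in (0 : ℝ)..T, m φ ^ 2)
    (hIc2 : ∫ φ in (0 : ℝ)..T, c φ ^ 2 = ∫ φ in (0 : ℝ)..T, m φ ^ 2) {θ : ℝ} (hθ : a θ ≠ c θ) :
    ∫ φ in (0 : ℝ)..T, a φ < ∫ φ in (0 : ℝ)..T, m φ := by
  by_contra hle
  rw [not_lt] at hle
  have hflat (φ : ℝ) : a φ + c φ = 2 * m φ := by
    by_contra hne
    have := Function.Periodic.intervalIntegral_lt_intervalIntegral (f := fun φ ↦ a φ + c φ)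
      (g := fun φ ↦ 2 * m φ) (fun φ ↦ by simp only [hpa φ, hpc φ])
      (fun φ ↦ by simp only [hpm φ]) hT (ha.add hc) (by fun_prop) hchord
      ((hchord φ).lt_of_ne hne)
    rw [intervalIntegral.integral_add (ha.intervalIntegrable _ _) (hc.intervalIntegrable _ _),
      intervalIntegral.integral_const_mul, hIc] at this
    linarith
  have hsq := Function.Periodic.intervalIntegral_lt_intervalIntegral
    (f := fun φ ↦ (2 * m φ) ^ 2) (g := fun φ ↦ 2 * a φ ^ 2 + 2 * c φ ^ 2)
    (fun φ ↦ by simp only [hpm φ]) (fun φ ↦ by simp only [hpa φ, hpc φ]) hT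
    (by fun_prop) (by fun_prop) (fun φ ↦ by rw [← hflat φ]; nlinarith [sq_nonneg (a φ - c φ)])
    (by rw [← hflat θ]; nlinarith [sq_pos_of_ne_zero (sub_ne_zero.2 hθ)])
  simp only [mul_pow] at hsq
  rw [intervalIntegral.integral_add
      ((by fun_prop : Continuous fun φ ↦ 2 * a φ ^ 2).intervalIntegrable _ _)
      ((by fun_prop : Continuous fun φ ↦ 2 * c φ ^ 2).intervalIntegrable _ _),
    intervalIntegral.integral_const_mul, intervalIntegral.integral_const_mul,
    intervalIntegral.integral_const_mul, hIa2, hIc2] at hsq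
  linarith

theorem setLIntegral_Ioi_indicator_Iio_ofReal {d : ℝ} (hd : 0 ≤ d) :
    ∫⁻ r in Set.Ioi 0, (Set.Iio d).indicator ENNReal.ofReal r = ENNReal.ofReal (d ^ 2 / 2) := by
  rw [lintegral_indicator measurableSet_Iio, Measure.restrict_restrict measurableSet_Iio,
    Set.Iio_inter_Ioi, ← ofReal_integral_eq_lintegral_ofReal, ← integral_Ioc_eq_integral_Ioo,
    ← intervalIntegral.integral_of_le hd, integral_id]
  · ring_nf
  · exact continuous_id.integrableOn_Icc.mono_set Set.Ioo_subset_Icc_self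
  · exact (ae_restrict_iff' measurableSet_Ioo).2 (ae_of_all _ fun r hr ↦ hr.1.le)

theorem exp_ofReal_add_pi_mul_I (φ : ℝ) :
    Complex.exp ((φ + π : ℝ) * Complex.I) = -Complex.exp (φ * Complex.I) := by
  push_cast
  rw [add_mul, Complex.exp_add_pi_mul_I]

theorem eq_add_norm_mul_exp_arg (z₀ z : ℂ) :
    z = z₀ + ‖z - z₀‖ * Complex.exp (Complex.arg (z - z₀) * Complex.I) := by
  rw [Complex.norm_mul_exp_arg_mul_I]
  ring

theorem IsOpen.preimage_const_add_mem_nhds_zero {G : Type*} [AddZeroClass G] [TopologicalSpace G]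
    [ContinuousAdd G] {U : Set G} {x : G} (hU : IsOpen U) (hx : x ∈ U) : (x + ·) ⁻¹' U ∈ 𝓝 0 :=
  (hU.preimage (continuous_const_add x)).mem_nhds (by simpa using hx)

theorem dirDeriv2_eq_zero_of_symmetric {v : ℂ → ℝ} {z₀ : ℂ} (hv : ∀ z, v (2 * z₀ - z) = v z)
    (σ : ℝ) : dirDeriv2 v σ z₀ = 0 := by
  set f : ℝ → ℝ := fun t ↦ v (z₀ + t * Complex.exp (σ * Complex.I))
  have heven : (fun t ↦ f (-t)) = f := by
    funext t
    simp only [f, ← hv (z₀ + t * Complex.exp (σ * Complex.I))]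
    congr 1
    push_cast
    ring
  have h := deriv_comp_neg (f := f) (x := 0)
  rw [heven, neg_zero] at h
  change deriv f 0 = 0
  linarith

theorem rayDist2_nonneg (U : Set ℂ) (x : ℂ) (φ : ℝ) : 0 ≤ rayDist2 U x φ :=
  Real.sSup_nonneg fun _ ht ↦ ht.1

theorem rayDist2_periodic (U : Set ℂ) (x : ℂ) : Function.Periodic (rayDist2 U x) (2 * π) := by
  intro φ
  simp only [rayDist2, Complex.ofReal_add, Complex.ofReal_mul, Complex.ofReal_ofNat,
    Complex.exp_mul_I_periodic φ]

theorem rayDist2_preimage_sub (U : Set ℂ) (c x : ℂ) (φ : ℝ) :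
    rayDist2 ((c - ·) ⁻¹' U) (c - x) φ = rayDist2 U x (φ + π) := by
  simp only [rayDist2, Set.mem_preimage, exp_ofReal_add_pi_mul_I]
  congr! 4 with t
  ring_nf

theorem Imom2_nonneg (U : Set ℂ) (k : ℕ) (x : ℂ) : 0 ≤ Imom2 U k x :=
  mul_nonneg (by positivity) <| intervalIntegral.integral_nonneg (by positivity)
    fun φ _ ↦ pow_nonneg (rayDist2_nonneg U x φ) k

theorem Imom2_preimage_sub (U : Set ℂ) (c x : ℂ) (k : ℕ) :
    Imom2 ((c - ·) ⁻¹' U) k (c - x) = Imom2 U k x := by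
  have hper : Function.Periodic (fun φ ↦ rayDist2 U x φ ^ k) (2 * π) :=
    (rayDist2_periodic U x).comp (· ^ k)
  simp only [Imom2, rayDist2_preimage_sub]
  rw [intervalIntegral.integral_comp_add_right (fun φ ↦ rayDist2 U x φ ^ k), zero_add,
    show 2 * π + π = π + 2 * π by ring, hper.intervalIntegral_add_eq π 0, zero_add]

theorem varDist2_preimage_sub (U : Set ℂ) (c x : ℂ) :
    varDist2 ((c - ·) ⁻¹' U) (c - x) = varDist2 U x := by
  simp only [varDist2, Imom2_preimage_sub]

section RayDist

variable {U : Set ℂ} {x z₀ : ℂ}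

theorem add_mul_exp_mem_iff_mul_gauge_lt_one (hU_open : IsOpen U) (hU_conv : Convex ℝ U)
    (hx : x ∈ U) {φ t : ℝ} (ht : 0 ≤ t) :
    x + t * Complex.exp (φ * Complex.I) ∈ U ↔
      t * gauge ((x + ·) ⁻¹' U) (Complex.exp (φ * Complex.I)) < 1 := by
  rw [← smul_eq_mul t, ← gauge_smul_of_nonneg ht, gauge_lt_one_iff_mem_interior
    (hU_conv.translate_preimage_right x) (hU_open.preimage_const_add_mem_nhds_zero hx),
    (hU_open.preimage (continuous_const_add x)).interior_eq, Complex.real_smul, Set.mem_preimage]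

theorem add_mul_exp_mem_closure_iff_mul_gauge_le_one (hU_open : IsOpen U)
    (hU_conv : Convex ℝ U) (hx : x ∈ U) {φ t : ℝ} (ht : 0 ≤ t) :
    x + t * Complex.exp (φ * Complex.I) ∈ closure U ↔
      t * gauge ((x + ·) ⁻¹' U) (Complex.exp (φ * Complex.I)) ≤ 1 := by
  rw [← smul_eq_mul t, ← gauge_smul_of_nonneg ht, gauge_le_one_iff_mem_closure
    (hU_conv.translate_preimage_right x) (hU_open.preimage_const_add_mem_nhds_zero hx),
    show closure ((x + ·) ⁻¹' U) = _ from ((Homeomorph.addLeft x).preimage_closure U).symm,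
    Complex.real_smul]
  rfl

theorem gauge_preimage_exp_mul_I_pos (hU_open : IsOpen U) (hU_bdd : Bornology.IsBounded U)
    (hx : x ∈ U) (φ : ℝ) : 0 < gauge ((x + ·) ⁻¹' U) (Complex.exp (φ * Complex.I)) := by
  refine (gauge_pos (absorbent_nhds_zero (hU_open.preimage_const_add_mem_nhds_zero hx)) ?_).2
    (Complex.exp_ne_zero _)
  exact (NormedSpace.isVonNBounded_iff ℝ).2
    ((IsometryEquiv.addLeft x).isometry.antilipschitz.isBounded_preimage hU_bdd)

theorem rayDist2_eq_inv_gauge (hU_open : IsOpen U) (hU_conv : Convex ℝ U)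
    (hU_bdd : Bornology.IsBounded U) (hx : x ∈ U) (φ : ℝ) :
    rayDist2 U x φ = (gauge ((x + ·) ⁻¹' U) (Complex.exp (φ * Complex.I)))⁻¹ := by
  have hg := gauge_preimage_exp_mul_I_pos hU_open hU_bdd hx φ
  have hray : {t : ℝ | 0 ≤ t ∧ x + t * Complex.exp (φ * Complex.I) ∈ U} =
      Set.Ico 0 (gauge ((x + ·) ⁻¹' U) (Complex.exp (φ * Complex.I)))⁻¹ := by
    ext t
    refine and_congr_right fun ht ↦ ?_
    rw [add_mul_exp_mem_iff_mul_gauge_lt_one hU_open hU_conv hx ht, ← one_div, lt_div_iff₀ hg]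
  rw [rayDist2, hray, csSup_Ico (inv_pos.2 hg)]

theorem rayDist2_pos (hU_open : IsOpen U) (hU_conv : Convex ℝ U)
    (hU_bdd : Bornology.IsBounded U) (hx : x ∈ U) (φ : ℝ) : 0 < rayDist2 U x φ := by
  rw [rayDist2_eq_inv_gauge hU_open hU_conv hU_bdd hx]
  exact inv_pos.2 (gauge_preimage_exp_mul_I_pos hU_open hU_bdd hx φ)

theorem add_mul_exp_mem_iff_lt_rayDist2 (hU_open : IsOpen U) (hU_conv : Convex ℝ U)
    (hU_bdd : Bornology.IsBounded U) (hx : x ∈ U) {φ t : ℝ} (ht : 0 ≤ t) :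
    x + t * Complex.exp (φ * Complex.I) ∈ U ↔ t < rayDist2 U x φ := by
  rw [add_mul_exp_mem_iff_mul_gauge_lt_one hU_open hU_conv hx ht,
    rayDist2_eq_inv_gauge hU_open hU_conv hU_bdd hx, ← one_div,
    lt_div_iff₀ (gauge_preimage_exp_mul_I_pos hU_open hU_bdd hx φ)]

theorem add_mul_exp_mem_closure_iff_le_rayDist2 (hU_open : IsOpen U) (hU_conv : Convex ℝ U)
    (hU_bdd : Bornology.IsBounded U) (hx : x ∈ U) {φ t : ℝ} (ht : 0 ≤ t) :
    x + t * Complex.exp (φ * Complex.I) ∈ closure U ↔ t ≤ rayDist2 U x φ := by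
  rw [add_mul_exp_mem_closure_iff_mul_gauge_le_one hU_open hU_conv hx ht,
    rayDist2_eq_inv_gauge hU_open hU_conv hU_bdd hx, ← one_div,
    le_div_iff₀ (gauge_preimage_exp_mul_I_pos hU_open hU_bdd hx φ)]

theorem continuous_rayDist2 (hU_open : IsOpen U) (hU_conv : Convex ℝ U)
    (hU_bdd : Bornology.IsBounded U) (hx : x ∈ U) : Continuous (rayDist2 U x) := by
  simp_rw [funext (rayDist2_eq_inv_gauge hU_open hU_conv hU_bdd hx)]
  exact ((continuous_gauge (hU_conv.translate_preimage_right x)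
    (hU_open.preimage_const_add_mem_nhds_zero hx)).comp (by fun_prop)).inv₀
      fun φ ↦ (gauge_preimage_exp_mul_I_pos hU_open hU_bdd hx φ).ne'

theorem rayDist2_add_mul_exp (hU_open : IsOpen U) (hU_conv : Convex ℝ U)
    (hU_bdd : Bornology.IsBounded U) (hx : x ∈ U) {φ ρ : ℝ} (hρ : 0 ≤ ρ)
    (hxρ : x + ρ * Complex.exp (φ * Complex.I) ∈ U) :
    rayDist2 U (x + ρ * Complex.exp (φ * Complex.I)) φ = rayDist2 U x φ - ρ := by
  refine eq_of_forall_lt_iff fun t ↦ ?_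
  rcases lt_or_ge t 0 with ht | ht
  · have := rayDist2_pos hU_open hU_conv hU_bdd hxρ φ
    have := (add_mul_exp_mem_iff_lt_rayDist2 hU_open hU_conv hU_bdd hx hρ).1 hxρ
    constructor <;> intro <;> linarith
  rw [← add_mul_exp_mem_iff_lt_rayDist2 hU_open hU_conv hU_bdd hxρ ht, lt_sub_iff_add_lt,
    ← add_mul_exp_mem_iff_lt_rayDist2 hU_open hU_conv hU_bdd hx (by linarith)]
  push_cast
  ring_nf

theorem concaveOn_rayDist2 (hU_open : IsOpen U) (hU_conv : Convex ℝ U)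
    (hU_bdd : Bornology.IsBounded U) (φ : ℝ) : ConcaveOn ℝ U (rayDist2 U · φ) := by
  refine ⟨hU_conv, fun y hy z hz a b ha hb hab ↦ ?_⟩
  have hm : a • y + b • z ∈ U := hU_conv hy hz ha hb hab
  have hry := (rayDist2_pos hU_open hU_conv hU_bdd hy φ).le
  have hrz := (rayDist2_pos hU_open hU_conv hU_bdd hz φ).le
  rw [← add_mul_exp_mem_closure_iff_le_rayDist2 hU_open hU_conv hU_bdd hm (by positivity)]
  have hcomb := hU_conv.closure
    ((add_mul_exp_mem_closure_iff_le_rayDist2 hU_open hU_conv hU_bdd hy hry).2 le_rfl)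
    ((add_mul_exp_mem_closure_iff_le_rayDist2 hU_open hU_conv hU_bdd hz hrz).2 le_rfl) ha hb hab
  convert hcomb using 1
  simp only [Complex.real_smul, smul_eq_mul]
  push_cast
  ring

theorem rayDist2_add_rayDist2_le (hU_open : IsOpen U) (hU_conv : Convex ℝ U)
    (hU_bdd : Bornology.IsBounded U) {y z : ℂ} (hy : y ∈ U) (hz : z ∈ U) (φ : ℝ) :
    rayDist2 U y φ + rayDist2 U z φ ≤ 2 * rayDist2 U ((y + z) / 2) φ := by
  have hmid := (concaveOn_rayDist2 hU_open hU_conv hU_bdd φ).2 hy hz (by norm_num) (by norm_num)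
    (add_halves 1)
  rw [smul_eq_mul, smul_eq_mul, Complex.real_smul, Complex.real_smul,
    show ((1 / 2 : ℝ) : ℂ) * y + ((1 / 2 : ℝ) : ℂ) * z = (y + z) / 2 by push_cast; ring] at hmid
  linarith

theorem rayDist2_lt_rayDist2_two_mul_sub (hU_open : IsOpen U) (hU_conv : Convex ℝ U)
    (hU_bdd : Bornology.IsBounded U) (hz₀ : z₀ ∈ U) {z : ℂ} (hz : z ∈ U) (hw : 2 * z₀ - z ∈ U)
    (hne : z ≠ z₀) :
    rayDist2 U z (Complex.arg (z - z₀)) < rayDist2 U (2 * z₀ - z) (Complex.arg (z - z₀)) := by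
  have hρ : 0 < ‖z - z₀‖ := norm_pos_iff.2 (sub_ne_zero.2 hne)
  have hz' := eq_add_norm_mul_exp_arg z₀ z
  have hz₀' : z₀ = 2 * z₀ - z + ‖z - z₀‖ * Complex.exp (Complex.arg (z - z₀) * Complex.I) := by
    linear_combination hz'
  have h1 := rayDist2_add_mul_exp hU_open hU_conv hU_bdd hz₀ hρ.le (hz' ▸ hz)
  have h2 := rayDist2_add_mul_exp hU_open hU_conv hU_bdd hw hρ.le (hz₀' ▸ hz₀)
  rw [← hz'] at h1
  rw [← hz₀'] at h2
  linarith

theorem volume_eq_setLIntegral_rayDist2_sq (hU_open : IsOpen U) (hU_conv : Convex ℝ U)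
    (hU_bdd : Bornology.IsBounded U) (hx : x ∈ U) :
    volume U = ∫⁻ φ in Set.Ioo (-π) π, ENNReal.ofReal (rayDist2 U x φ ^ 2 / 2) := by
  have hpolar (p : ℝ × ℝ) : Complex.polarCoord.symm p = p.1 * Complex.exp (p.2 * Complex.I) := by
    simp [Complex.exp_mul_I]
  have hmeas : Measurable fun p : ℝ × ℝ ↦
      ENNReal.ofReal p.1 • U.indicator (1 : ℂ → ENNReal) (x + Complex.polarCoord.symm p) := by
    simp only [hpolar]
    exact ENNReal.measurable_ofReal.comp measurable_fst |>.smul <|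
      (measurable_one.indicator hU_open.measurableSet).comp (by fun_prop)
  rw [← lintegral_indicator_one hU_open.measurableSet,
    ← lintegral_add_left_eq_self _ x, ← Complex.lintegral_comp_polarCoord_symm,
    polarCoord_target, Measure.volume_eq_prod, ← Measure.prod_restrict,
    lintegral_prod_symm' _ hmeas]
  refine setLIntegral_congr_fun measurableSet_Ioo fun φ _ ↦ ?_
  rw [← setLIntegral_Ioi_indicator_Iio_ofReal (rayDist2_pos hU_open hU_conv hU_bdd hx φ).le]
  refine setLIntegral_congr_fun measurableSet_Ioi fun r hr ↦ ?_
  have hmem := add_mul_exp_mem_iff_lt_rayDist2 hU_open hU_conv hU_bdd hx (φ := φ) hr.out.le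
  by_cases h : r < rayDist2 U x φ
  · simp [hpolar, Set.indicator_of_mem (hmem.2 h), Set.indicator_of_mem (Set.mem_Iio.2 h)]
  · simp [hpolar, Set.indicator_of_notMem (mt hmem.1 h),
      Set.indicator_of_notMem (mt Set.mem_Iio.1 h)]

theorem integral_rayDist2_sq (hU_open : IsOpen U) (hU_conv : Convex ℝ U)
    (hU_bdd : Bornology.IsBounded U) (hx : x ∈ U) :
    ∫ φ in (0 : ℝ)..2 * π, rayDist2 U x φ ^ 2 = 2 * volume.real U := by
  have hcont := continuous_rayDist2 hU_open hU_conv hU_bdd hx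
  have hshift : ∫ φ in -π..π, rayDist2 U x φ ^ 2 = ∫ φ in (0 : ℝ)..2 * π, rayDist2 U x φ ^ 2 := by
    have := ((rayDist2_periodic U x).comp (· ^ 2)).intervalIntegral_add_eq (-π) 0
    rwa [zero_add, show -π + 2 * π = π by ring] at this
  rw [← hshift, intervalIntegral.integral_of_le (by linarith [pi_pos]),
    integral_Ioc_eq_integral_Ioo, measureReal_def,
    volume_eq_setLIntegral_rayDist2_sq hU_open hU_conv hU_bdd hx,
    ← ofReal_integral_eq_lintegral_ofReal, ENNReal.toReal_ofReal, integral_div]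
  · ring
  · exact integral_nonneg fun φ ↦ by positivity
  · exact ((hcont.pow 2).div_const 2).integrableOn_Icc.mono_set Set.Ioo_subset_Icc_self
  · exact ae_of_all _ fun φ ↦ by positivity

theorem Imom2_two (hU_open : IsOpen U) (hU_conv : Convex ℝ U)
    (hU_bdd : Bornology.IsBounded U) (hx : x ∈ U) : Imom2 U 2 x = volume.real U / π := by
  rw [Imom2, integral_rayDist2_sq hU_open hU_conv hU_bdd hx]
  field_simp

theorem preimage_two_mul_sub_eq_of_rayDist2_eq (hU_open : IsOpen U) (hU_conv : Convex ℝ U)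
    (hU_bdd : Bornology.IsBounded U) (hz₀ : z₀ ∈ U)
    (hsym : ∀ φ, rayDist2 U z₀ φ = rayDist2 U z₀ (φ + π)) : (2 * z₀ - ·) ⁻¹' U = U := by
  have hmem : ∀ y ∈ U, 2 * z₀ - y ∈ U := by
    intro y hy
    rw [eq_add_norm_mul_exp_arg z₀ y,
      add_mul_exp_mem_iff_lt_rayDist2 hU_open hU_conv hU_bdd hz₀ (norm_nonneg _), hsym,
      ← add_mul_exp_mem_iff_lt_rayDist2 hU_open hU_conv hU_bdd hz₀ (norm_nonneg _),
      exp_ofReal_add_pi_mul_I] at hy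
    convert hy using 1
    nth_rewrite 1 [eq_add_norm_mul_exp_arg z₀ y]
    ring
  exact Set.Subset.antisymm (fun y hy ↦ by simpa using hmem _ hy) hmem

theorem Imom2_one_lt_of_preimage_eq (hU_open : IsOpen U) (hU_conv : Convex ℝ U)
    (hU_bdd : Bornology.IsBounded U) (hz₀ : z₀ ∈ U) (hrefl : (2 * z₀ - ·) ⁻¹' U = U)
    {z : ℂ} (hz : z ∈ U) (hne : z ≠ z₀) : Imom2 U 1 z < Imom2 U 1 z₀ := by
  have hw : 2 * z₀ - z ∈ U := by rw [← hrefl] at hz; simpa using hz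
  have hmean (x : ℂ) : Imom2 U 1 x = (2 * π)⁻¹ * ∫ φ in (0 : ℝ)..2 * π, rayDist2 U x φ := by
    simp [Imom2]
  have hIc := Imom2_preimage_sub U (2 * z₀) z 1
  rw [hrefl, hmean, hmean, mul_right_inj' (by positivity)] at hIc
  have hchord := rayDist2_add_rayDist2_le hU_open hU_conv hU_bdd hz hw
  rw [show (z + (2 * z₀ - z)) / 2 = z₀ by ring] at hchord
  rw [hmean, hmean, mul_lt_mul_iff_right₀ (by positivity)]
  refine intervalIntegral_lt_of_add_le_two_mul two_pi_pos
    (continuous_rayDist2 hU_open hU_conv hU_bdd hz) (continuous_rayDist2 hU_open hU_conv hU_bdd hw)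
    (continuous_rayDist2 hU_open hU_conv hU_bdd hz₀) (rayDist2_periodic U z)
    (rayDist2_periodic U _) (rayDist2_periodic U z₀) hchord hIc ?_ ?_
    (rayDist2_lt_rayDist2_two_mul_sub hU_open hU_conv hU_bdd hz₀ hz hw hne).ne
  · rw [integral_rayDist2_sq hU_open hU_conv hU_bdd hz,
      integral_rayDist2_sq hU_open hU_conv hU_bdd hz₀]
  · rw [integral_rayDist2_sq hU_open hU_conv hU_bdd hw,
      integral_rayDist2_sq hU_open hU_conv hU_bdd hz₀]

end RayDist

theorem variocentre_of_symmetry_general (U : Set ℂ) (hU_open : IsOpen U) (hU_conv : Convex ℝ U)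
    (hU_bdd : Bornology.IsBounded U) (z₀ : ℂ) (hz₀ : z₀ ∈ U)
    (hsym : ∀ φ ∈ Set.Ico (0:ℝ) (2 * π), rayDist2 U z₀ φ = rayDist2 U z₀ (φ + π)) :
    (∀ σ : ℝ, dirDeriv2 (varDist2 U) σ z₀ = 0) ∧
      ∀ z ∈ U, z ≠ z₀ → varDist2 U z₀ < varDist2 U z := by
  have hsym' := (rayDist2_periodic U z₀).eq_of_eqOn_Ico ((rayDist2_periodic U z₀).add_const π)
    two_pi_pos hsym
  have hrefl := preimage_two_mul_sub_eq_of_rayDist2_eq hU_open hU_conv hU_bdd hz₀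
    (congrFun hsym')
  refine ⟨dirDeriv2_eq_zero_of_symmetric fun z ↦ ?_, fun z hz hne ↦ ?_⟩
  · rw [← varDist2_preimage_sub U (2 * z₀) z, hrefl]
  · have hlt := Imom2_one_lt_of_preimage_eq hU_open hU_conv hU_bdd hz₀ hrefl hz hne
    have hnonneg := Imom2_nonneg U 1 z
    rw [varDist2, varDist2, Imom2_two hU_open hU_conv hU_bdd hz,
      Imom2_two hU_open hU_conv hU_bdd hz₀]
    nlinarith

/-- If the distance to the boundary from z₀ is symmetric under φ ↦ φ + π, then z₀ is a
critical point of the variance, and is its unique minimum (the variocentre). -/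
theorem variocentre_of_symmetry (U : Set ℂ) (hU_open : IsOpen U) (hU_conv : Convex ℝ U)
    (hU_bdd : Bornology.IsBounded U) (hU_ne : U.Nonempty) (z₀ : ℂ) (hz₀ : z₀ ∈ U)
    (hsym : ∀ φ ∈ Set.Ico (0:ℝ) (2 * π), rayDist2 U z₀ φ = rayDist2 U z₀ (φ + π)) :
    (∀ σ : ℝ, dirDeriv2 (varDist2 U) σ z₀ = 0) ∧
      ∀ z ∈ U, z ≠ z₀ → varDist2 U z₀ < varDist2 U z :=
  variocentre_of_symmetry_general U hU_open hU_conv hU_bdd z₀ hz₀ hsym
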